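/- Let M ≥ 1 and let w₁, …, w_M ∈ ℝ^N and b₁, …, b_M ∈ ℝ determine affine hyperplanes {x : ⟨w_i, x⟩ = b_i} in general position, meaning: every subset of at most N of the vectors w_i is linearly independent, and for every subset B of {1,…,M} with |B| > N there is no x ∈ ℝ^N satisfying ⟨w_i, x⟩ = b_i for all i ∈ B. Then the number of connected components of {x ∈ ℝ^N : ⟨w_i, x⟩ ≠ b_i for all i = 1,…,M} equals Σ_{j=0}^{N} C(M, j), where C denotes the binomial coefficient. -/

import Mathlib

open Matrix

namespace CardRegions

variable {M N : ℕ}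

def cell (w : Fin M → Fin N → ℝ) (b : Fin M → ℝ) (s : Fin M → Bool) : Set (Fin N → ℝ) :=
  {x | ∀ i, if s i then b i < w i ⬝ᵥ x else w i ⬝ᵥ x < b i}

def Feas (w : Fin M → Fin N → ℝ) (b : Fin M → ℝ) : Set (Fin M → Bool) :=
  {s | (cell w b s).Nonempty}

lemma isLinearMap_dot (v : Fin N → ℝ) : IsLinearMap ℝ fun x : Fin N → ℝ => v ⬝ᵥ x :=
  ⟨fun x y => dotProduct_add v x y, fun c x => by simp [dotProduct_smul]⟩

lemma continuous_dot (v : Fin N → ℝ) : Continuous fun x : Fin N → ℝ => v ⬝ᵥ x := by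
  simp only [dotProduct]
  exact continuous_finset_sum _ fun j _ => continuous_const.mul (continuous_apply j)

lemma cell_convex (w : Fin M → Fin N → ℝ) (b : Fin M → ℝ) (s : Fin M → Bool) :
    Convex ℝ (cell w b s) := by
  have : cell w b s = ⋂ i, {x | if s i then b i < w i ⬝ᵥ x else w i ⬝ᵥ x < b i} := by
    ext x; simp [cell, Set.mem_iInter]
  rw [this]
  refine convex_iInter fun i => ?_
  by_cases h : s i <;> simp only [h, if_true, if_false]
  · exact convex_halfSpace_gt (isLinearMap_dot (w i)) (b i)
  · exact convex_halfSpace_lt (isLinearMap_dot (w i)) (b i)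

lemma cell_open (w : Fin M → Fin N → ℝ) (b : Fin M → ℝ) (s : Fin M → Bool) :
    IsOpen (cell w b s) := by
  have : cell w b s = ⋂ i, {x | if s i then b i < w i ⬝ᵥ x else w i ⬝ᵥ x < b i} := by
    ext x; simp [cell, Set.mem_iInter]
  rw [this]
  refine isOpen_iInter_of_finite fun i => ?_
  by_cases h : s i <;> simp only [h, if_true, if_false]
  · exact isOpen_lt continuous_const (continuous_dot (w i))
  · exact isOpen_lt (continuous_dot (w i)) continuous_const

lemma perturb {w : Fin M → Fin N → ℝ} {b : Fin M → ℝ} {s : Fin M → Bool}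
    {x : Fin N → ℝ} (hx : x ∈ cell w b s) (d : Fin N → ℝ) :
    ∃ ε > 0, ∀ δ : ℝ, |δ| < ε → x + δ • d ∈ cell w b s := by
  obtain ⟨ε, hε, hball⟩ := Metric.isOpen_iff.1 (cell_open w b s) x hx
  refine ⟨ε / (‖d‖ + 1), by positivity, fun δ hδ => ?_⟩
  apply hball
  rw [Metric.mem_ball, dist_eq_norm, add_sub_cancel_left, norm_smul, Real.norm_eq_abs]
  calc |δ| * ‖d‖ ≤ |δ| * (‖d‖ + 1) := by nlinarith [abs_nonneg δ, norm_nonneg d]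
    _ < ε / (‖d‖ + 1) * (‖d‖ + 1) := by
        have h1 : (0:ℝ) < ‖d‖ + 1 := by positivity
        exact mul_lt_mul_of_pos_right hδ h1
    _ = ε := by field_simp


variable {w : Fin M → Fin N → ℝ} {b : Fin M → ℝ}

/-- the sign vector of a point in the complement -/
noncomputable def sgn (w : Fin M → Fin N → ℝ) (b : Fin M → ℝ)
    (x : {x : Fin N → ℝ // ∀ i, w i ⬝ᵥ x ≠ b i}) : Fin M → Bool :=
  fun i => decide (b i < w i ⬝ᵥ x.1)

lemma mem_cell_sgn (x : {x : Fin N → ℝ // ∀ i, w i ⬝ᵥ x ≠ b i}) :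
    x.1 ∈ cell w b (sgn w b x) := by
  intro i
  by_cases h : b i < w i ⬝ᵥ x.1
  · simp [sgn, h]
  · have : w i ⬝ᵥ x.1 < b i := lt_of_le_of_ne (not_lt.1 h) (x.2 i)
    simp [sgn, h, this]

lemma cell_sub_compl {s : Fin M → Bool} {x : Fin N → ℝ} (hx : x ∈ cell w b s) :
    ∀ i, w i ⬝ᵥ x ≠ b i := by
  intro i
  have := hx i
  by_cases h : s i
  · simp only [h, if_true] at this; exact (ne_of_gt this)
  · simp only [h, if_false] at this; exact (ne_of_lt this)

lemma sgn_eq_of_mem_cell {s : Fin M → Bool} {x : Fin N → ℝ} (hx : x ∈ cell w b s) :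
    (fun i => decide (b i < w i ⬝ᵥ x)) = s := by
  funext i
  have := hx i
  by_cases h : s i <;> simp only [h, if_true, if_false] at this <;> simp [h, this, not_lt.2 this.le]

lemma sgn_const {S : Set {x : Fin N → ℝ // ∀ i, w i ⬝ᵥ x ≠ b i}} (hS : IsPreconnected S)
    {x y} (hx : x ∈ S) (hy : y ∈ S) : sgn w b x = sgn w b y := by
  funext i
  by_contra hne
  have hcont : ContinuousOn (fun z : {x : Fin N → ℝ // ∀ i, w i ⬝ᵥ x ≠ b i} => w i ⬝ᵥ z.1) S :=
    ((continuous_dot (w i)).comp continuous_subtype_val).continuousOn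
  have hconst : ContinuousOn (fun _ : {x : Fin N → ℝ // ∀ i, w i ⬝ᵥ x ≠ b i} => b i) S :=
    continuousOn_const
  rcases Bool.eq_false_or_eq_true (sgn w b x i) with h1 | h1 <;>
    rcases Bool.eq_false_or_eq_true (sgn w b y i) with h2 | h2 <;>
      simp only [sgn] at h1 h2 <;> simp [sgn, h1, h2] at hne ⊢
  · -- x : true (b < val), y : false (val < b)
    have hxgt : b i ≤ w i ⬝ᵥ x.1 := (decide_eq_true_eq.mp h1).le
    have hylt : w i ⬝ᵥ y.1 ≤ b i := not_lt.1 (decide_eq_false_iff_not.mp h2)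
    obtain ⟨z, hzS, hz⟩ := hS.intermediate_value₂ hx hy hconst hcont hxgt hylt
    exact z.2 i hz.symm
  · -- x : false, y : true
    have hxlt : w i ⬝ᵥ x.1 ≤ b i := not_lt.1 (decide_eq_false_iff_not.mp h1)
    have hygt : b i ≤ w i ⬝ᵥ y.1 := (decide_eq_true_eq.mp h2).le
    obtain ⟨z, hzS, hz⟩ := hS.intermediate_value₂ hx hy hcont hconst hxlt hygt
    exact z.2 i hz


lemma isPreconnected_cell_subtype (s : Fin M → Bool) :
    IsPreconnected (Subtype.val ⁻¹' (cell w b s) :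
      Set {x : Fin N → ℝ // ∀ i, w i ⬝ᵥ x ≠ b i}) := by
  refine Topology.IsInducing.subtypeVal.isPreconnected_image.mp ?_
  convert (cell_convex w b s).isPreconnected using 1
  ext z
  constructor
  · rintro ⟨u, hu, rfl⟩; exact hu
  · intro hz; exact ⟨⟨z, cell_sub_compl hz⟩, hz, rfl⟩

lemma card_components_eq_card_feas (w : Fin M → Fin N → ℝ) (b : Fin M → ℝ) :
    Nat.card (ConnectedComponents {x : Fin N → ℝ // ∀ i, w i ⬝ᵥ x ≠ b i})
      = Nat.card (Feas w b) := by
  let X := {x : Fin N → ℝ // ∀ i, w i ⬝ᵥ x ≠ b i}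
  let f : ConnectedComponents X → Feas w b :=
    Quotient.lift (fun x : X => (⟨sgn w b x, ⟨x.1, mem_cell_sgn x⟩⟩ : Feas w b))
      (fun x y hxy => by
        have h : y ∈ connectedComponent x := by
          rw [show connectedComponent x = connectedComponent y from hxy]
          exact mem_connectedComponent
        exact Subtype.ext (sgn_const isPreconnected_connectedComponent
          mem_connectedComponent h))
  refine Nat.card_eq_of_bijective f ⟨?_, ?_⟩
  · rintro ⟨x⟩ ⟨y⟩ hxy
    have hxy' : sgn w b x = sgn w b y := congrArg Subtype.val hxy
    have hx : x ∈ (Subtype.val ⁻¹' (cell w b (sgn w b x)) : Set X) := mem_cell_sgn x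
    have hy : y ∈ (Subtype.val ⁻¹' (cell w b (sgn w b x)) : Set X) := by
      rw [hxy']; exact mem_cell_sgn y
    have := (isPreconnected_cell_subtype (sgn w b x)).subset_connectedComponent hy
    exact Quotient.sound (connectedComponent_eq (this hx)).symm
  · rintro ⟨s, x, hx⟩
    refine ⟨ConnectedComponents.mk ⟨x, cell_sub_compl hx⟩, ?_⟩
    exact Subtype.ext (sgn_eq_of_mem_cell hx)


lemma dot_self_pos {v : Fin N → ℝ} (hv : v ≠ 0) : 0 < v ⬝ᵥ v := by
  have hne : v ⬝ᵥ v ≠ 0 := fun h => hv (dotProduct_self_eq_zero.1 h)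
  have hnn : 0 ≤ v ⬝ᵥ v := by
    simp only [dotProduct]
    exact Finset.sum_nonneg fun i _ => mul_self_nonneg _
  exact lt_of_le_of_ne hnn (Ne.symm hne)

lemma sum_dot {ι : Type*} (s : Finset ι) (f : ι → Fin N → ℝ) (z : Fin N → ℝ) :
    (∑ i ∈ s, f i) ⬝ᵥ z = ∑ i ∈ s, f i ⬝ᵥ z := by
  simp only [dotProduct, Finset.sum_apply, Finset.sum_mul]
  rw [Finset.sum_comm]

lemma dot_eq_zero_of_forall {v : Fin N → ℝ} (h : ∀ x, v ⬝ᵥ x = 0) : v = 0 := by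
  funext i
  have := h (Pi.single i 1)
  rwa [dotProduct_single, mul_one] at this

/-- a functional vanishing on the kernel of a nonzero functional is a multiple of it -/
lemma eq_smul_of_forall_ker {vM v : Fin N → ℝ} (hvM : vM ≠ 0)
    (h : ∀ x, vM ⬝ᵥ x = 0 → v ⬝ᵥ x = 0) : ∃ c : ℝ, v = c • vM := by
  have hself : vM ⬝ᵥ vM ≠ 0 := fun hc => hvM (dotProduct_self_eq_zero.1 hc)
  set x₀ : Fin N → ℝ := (vM ⬝ᵥ vM)⁻¹ • vM with hx₀
  have hvx₀ : vM ⬝ᵥ x₀ = 1 := by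
    rw [hx₀, dotProduct_smul, smul_eq_mul, inv_mul_cancel₀ hself]
  refine ⟨v ⬝ᵥ x₀, ?_⟩
  have key : ∀ x : Fin N → ℝ, (v - (v ⬝ᵥ x₀) • vM) ⬝ᵥ x = 0 := by
    intro x
    have hker : vM ⬝ᵥ (x - (vM ⬝ᵥ x) • x₀) = 0 := by
      rw [dotProduct_sub, dotProduct_smul, hvx₀, smul_eq_mul, mul_one, sub_self]
    have := h _ hker
    rw [dotProduct_sub, dotProduct_smul, smul_eq_mul, sub_eq_zero] at this
    rw [sub_dotProduct, smul_dotProduct, smul_eq_mul, this]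
    ring
  have := dot_eq_zero_of_forall key
  exact sub_eq_zero.1 this

lemma exists_ker_basis {N : ℕ} {v : Fin (N + 1) → ℝ} (hv : v ≠ 0) :
    ∃ col : Fin N → (Fin (N + 1) → ℝ),
      (∀ j, v ⬝ᵥ col j = 0) ∧
      (∀ x, v ⬝ᵥ x = 0 → ∃ y : Fin N → ℝ, x = ∑ j, y j • col j) := by
  have hself : v ⬝ᵥ v ≠ 0 := fun hc => hv (dotProduct_self_eq_zero.1 hc)
  set φ : (Fin (N + 1) → ℝ) →ₗ[ℝ] ℝ := IsLinearMap.mk' _ (isLinearMap_dot v) with hφ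
  have hφ_apply : ∀ x, φ x = v ⬝ᵥ x := fun x => rfl
  have hsurj : Function.Surjective φ := by
    intro r
    refine ⟨(r / (v ⬝ᵥ v)) • v, ?_⟩
    rw [hφ_apply, dotProduct_smul, smul_eq_mul]
    field_simp
  have hrange : LinearMap.range φ = ⊤ := LinearMap.range_eq_top.2 hsurj
  have hrank : Module.finrank ℝ (LinearMap.ker φ) = N := by
    have h1 := LinearMap.finrank_range_add_finrank_ker φ
    rw [hrange] at h1
    rw [finrank_top, Module.finrank_self, Module.finrank_pi, Fintype.card_fin] at h1
    omega
  set basis := Module.finBasisOfFinrankEq ℝ (LinearMap.ker φ) hrank with hbasis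
  refine ⟨fun j => (basis j : Fin (N + 1) → ℝ), fun j => (basis j).2, ?_⟩
  intro x hx
  have hxK : x ∈ LinearMap.ker φ := hx
  refine ⟨fun j => (basis.repr ⟨x, hxK⟩) j, ?_⟩
  have h2 := congrArg (Subtype.val) (basis.sum_repr ⟨x, hxK⟩)
  calc x = ((⟨x, hxK⟩ : LinearMap.ker φ) : Fin (N + 1) → ℝ) := rfl
    _ = ((∑ i : Fin N, (basis.repr ⟨x, hxK⟩) i • basis i : LinearMap.ker φ) :
          Fin (N + 1) → ℝ) := h2.symm
    _ = ∑ j : Fin N, (basis.repr ⟨x, hxK⟩) j • (basis j : Fin (N + 1) → ℝ) := by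
          rw [AddSubmonoidClass.coe_finset_sum]
          simp only [SetLike.val_smul]

/-- coefficient form of the linear-independence hypothesis. -/
lemma coeffs_of_hgen₁ {V : Type*} [AddCommGroup V] [Module ℝ V] {w : Fin M → V}
    (h : ∀ B : Finset (Fin M), B.card ≤ N → LinearIndependent ℝ (fun i : B => w i))
    (c : Fin M → ℝ) (hcard : (Finset.univ.filter fun i => c i ≠ 0).card ≤ N)
    (hsum : ∑ i, c i • w i = 0) : ∀ i, c i = 0 := by
  intro i
  by_contra hci
  set B := Finset.univ.filter fun i => c i ≠ 0 with hB
  have hiB : i ∈ B := by simp [hB, hci]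
  have hLI := h B hcard
  rw [Fintype.linearIndependent_iff] at hLI
  have hsum' : ∑ j : B, c j • w j = 0 := by
    rw [Finset.sum_coe_sort B (fun j => c j • w j)]
    rw [← hsum]
    refine Finset.sum_subset (Finset.subset_univ B) fun x _ hx => ?_
    have hc0 : c x = 0 := by
      by_contra hne; exact hx (by simp [hB, hne])
    rw [hc0, zero_smul]
  exact hci (hLI (fun j => c j) hsum' ⟨i, hiB⟩)

/-- subset form from coefficient form. -/
lemma hgen₁_of_coeffs {V : Type*} [AddCommGroup V] [Module ℝ V] {w : Fin M → V}
    (h : ∀ c : Fin M → ℝ, (Finset.univ.filter fun i => c i ≠ 0).card ≤ N →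
      ∑ i, c i • w i = 0 → ∀ i, c i = 0) :
    ∀ B : Finset (Fin M), B.card ≤ N → LinearIndependent ℝ (fun i : B => w i) := by
  intro B hB
  rw [Fintype.linearIndependent_iff]
  intro g hg j
  classical
  set c : Fin M → ℝ := fun i => if hi : i ∈ B then g ⟨i, hi⟩ else 0 with hc
  have hsupp : (Finset.univ.filter fun i => c i ≠ 0) ⊆ B := by
    intro i hi
    simp only [Finset.mem_filter, hc] at hi
    by_contra hiB
    exact hi.2 (dif_neg hiB)
  have hcard : (Finset.univ.filter fun i => c i ≠ 0).card ≤ N :=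
    le_trans (Finset.card_le_card hsupp) hB
  have hsum : ∑ i, c i • w i = 0 := by
    have h1 : ∑ i : Fin M, c i • w i = ∑ j : B, c j • w j := by
      rw [Finset.sum_coe_sort B (fun j => c j • w j)]
      exact (Finset.sum_subset (Finset.subset_univ B)
        (fun x _ hx => by simp [hc, dif_neg hx])).symm
    rw [h1, ← hg]
    refine Finset.sum_congr rfl fun i _ => ?_
    simp [hc, i.2]
  have := h c hcard hsum j
  rw [hc] at this
  simpa [j.2] using this


lemma sum_choose_succ (M n : ℕ) :
    ∑ j ∈ Finset.range (n + 2), (M + 1).choose j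
      = ∑ j ∈ Finset.range (n + 2), M.choose j + ∑ j ∈ Finset.range (n + 1), M.choose j := by
  rw [Finset.sum_range_succ' (fun j => (M + 1).choose j),
    Finset.sum_range_succ' (fun j => M.choose j)]
  simp only [Nat.choose_succ_succ, Nat.choose_zero_right]
  rw [Finset.sum_add_distrib]
  ring

theorem feas_count : ∀ (M : ℕ) {N : ℕ} (w : Fin M → Fin N → ℝ) (b : Fin M → ℝ),
    (∀ B : Finset (Fin M), B.card ≤ N → LinearIndependent ℝ (fun i : B => w i)) →
    (∀ B : Finset (Fin M), N < B.card → ¬∃ x : Fin N → ℝ, ∀ i ∈ B, w i ⬝ᵥ x = b i) →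
    Nat.card (Feas w b) = ∑ j ∈ Finset.range (N + 1), Nat.choose M j := by
  intro M
  induction M with
  | zero =>
    intro N w b _ _
    have hFeas : Feas w b = Set.univ := by
      ext s
      simp only [Set.mem_univ, iff_true]
      exact ⟨0, fun i => i.elim0⟩
    rw [hFeas, Nat.card_coe_set_eq, Set.ncard_univ]
    rw [Finset.sum_eq_single 0 (fun j _ hj => Nat.choose_eq_zero_of_lt (Nat.pos_of_ne_zero hj))
      (by simp)]
    simp [Nat.card_eq_fintype_card]
  | succ M ih =>
    intro N w b hgen₁ hgen₂
    match N with
    | 0 =>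
      have hdot : ∀ (v x : Fin 0 → ℝ), v ⬝ᵥ x = 0 := by
        intro v x; simp [dotProduct]
      have hb : ∀ i, b i ≠ 0 := by
        intro i hbi
        exact hgen₂ {i} (by simp) ⟨0, fun k hk => by
          rw [Finset.mem_singleton] at hk; subst hk; rw [hdot, hbi]⟩
      have hFeas : Feas w b = {fun i => decide (b i < 0)} := by
        ext s
        constructor
        · rintro ⟨x, hx⟩
          funext i
          have hi := hx i
          by_cases hs : s i
          · rw [hs]
            simp only [hs, if_true, hdot] at hi
            simp [hi]
          · simp only [Bool.not_eq_true] at hs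
            rw [hs]
            simp only [hs, if_false, Bool.false_eq_true, hdot] at hi
            simp [not_lt.2 hi.le]
        · intro hs
          rw [Set.mem_singleton_iff] at hs
          subst hs
          refine ⟨0, fun i => ?_⟩
          by_cases hbi : b i < 0
          · simp [hbi, hdot]
          · have : 0 < b i := lt_of_le_of_ne (not_lt.1 hbi) (Ne.symm (hb i))
            simp [hbi, hdot, this]
      rw [hFeas, Nat.card_coe_set_eq, Set.ncard_singleton, Finset.sum_range_one, Nat.choose_zero_right]
    | (N' + 1) =>
      have hwl : w (Fin.last M) ≠ 0 := by
        have hLI := hgen₁ {Fin.last M} (by simp)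
        exact hLI.ne_zero ⟨Fin.last M, Finset.mem_singleton_self _⟩
      have hself : (0:ℝ) < w (Fin.last M) ⬝ᵥ w (Fin.last M) := dot_self_pos hwl
      set wl := w (Fin.last M) with hwl_def
      set bl := b (Fin.last M) with hbl_def
      set p : Fin (N' + 1) → ℝ := (bl / (wl ⬝ᵥ wl)) • wl with hp_def
      have hp : wl ⬝ᵥ p = bl := by
        rw [hp_def, dotProduct_smul, smul_eq_mul]
        field_simp
      obtain ⟨col, hcol0, hcolspan⟩ := exists_ker_basis hwl
      set wr : Fin M → Fin (N' + 1) → ℝ := fun i => w i.castSucc with hwr_def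
      set br : Fin M → ℝ := fun i => b i.castSucc with hbr_def
      set u : Fin M → Fin N' → ℝ := fun i j => wr i ⬝ᵥ col j with hu_def
      set b' : Fin M → ℝ := fun i => br i - wr i ⬝ᵥ p with hb'_def
      have dotL : ∀ (v : Fin (N' + 1) → ℝ) (y : Fin N' → ℝ),
          v ⬝ᵥ (∑ j, y j • col j) = ∑ j, y j * (v ⬝ᵥ col j) := by
        intro v y
        rw [dotProduct_comm, sum_dot]
        refine Finset.sum_congr rfl fun j _ => ?_
        rw [smul_dotProduct, smul_eq_mul, dotProduct_comm]
      have hu : ∀ (i : Fin M) (y : Fin N' → ℝ),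
          u i ⬝ᵥ y = wr i ⬝ᵥ (∑ j, y j • col j) := by
        intro i y
        rw [dotL]
        simp only [dotProduct, hu_def]
        exact Finset.sum_congr rfl fun j _ => mul_comm _ _
      -- hypotheses for the deleted arrangement
      have hgen₁r : ∀ B : Finset (Fin M), B.card ≤ N' + 1 →
          LinearIndependent ℝ (fun i : B => wr i) := by
        intro B hB
        have h1 := hgen₁ (B.map Fin.castSuccEmb) (by rwa [Finset.card_map])
        exact h1.comp (fun i : B => (⟨i.1.castSucc, Finset.mem_map_of_mem _ i.2⟩ :
            (B.map Fin.castSuccEmb : Finset (Fin (M+1)))))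
          (fun i j hij => Subtype.ext (Fin.castSucc_injective M (congrArg Subtype.val hij)))
      have hgen₂r : ∀ B : Finset (Fin M), N' + 1 < B.card →
          ¬∃ x : Fin (N' + 1) → ℝ, ∀ i ∈ B, wr i ⬝ᵥ x = br i := by
        rintro B hB ⟨x, hx⟩
        refine hgen₂ (B.map Fin.castSuccEmb) (by rwa [Finset.card_map]) ⟨x, ?_⟩
        intro k hk
        rw [Finset.mem_map] at hk
        obtain ⟨i, hi, rfl⟩ := hk
        exact hx i hi
      -- hypotheses for the restricted arrangement
      have hcoeffs_u : ∀ c : Fin M → ℝ, (Finset.univ.filter fun i => c i ≠ 0).card ≤ N' →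
          ∑ i, c i • u i = 0 → ∀ i, c i = 0 := by
        intro c hcard hsum
        set v : Fin (N' + 1) → ℝ := ∑ i, c i • wr i with hv_def
        have hvcol : ∀ j, v ⬝ᵥ col j = 0 := by
          intro j
          rw [hv_def, sum_dot]
          have heach : ∀ i : Fin M, (c i • wr i) ⬝ᵥ col j = c i * u i j := by
            intro i; rw [smul_dotProduct, smul_eq_mul]
          rw [Finset.sum_congr rfl fun i _ => heach i]
          have hj := congrFun hsum j
          simpa [Finset.sum_apply] using hj
        have hvker : ∀ x, wl ⬝ᵥ x = 0 → v ⬝ᵥ x = 0 := by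
          intro x hx
          obtain ⟨y, rfl⟩ := hcolspan x hx
          rw [dotL]
          simp [hvcol]
        obtain ⟨cl, hcl⟩ := eq_smul_of_forall_ker hwl hvker
        set C : Fin (M + 1) → ℝ := Fin.lastCases (-cl) c with hC_def
        have hClast : C (Fin.last M) = -cl := by
          simp [hC_def]
        have hCcast : ∀ i : Fin M, C i.castSucc = c i := fun i => by
          simp [hC_def]
        have hCsum : ∑ k, C k • w k = 0 := by
          rw [Fin.sum_univ_castSucc]
          have h1 : ∀ i : Fin M, C i.castSucc • w i.castSucc = c i • wr i := by
            intro i; rw [hCcast]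
          rw [Finset.sum_congr rfl fun i _ => h1 i, hClast, ← hv_def, hcl]
          rw [← hwl_def]
          abel_nf
          simp
        have hCsupp : (Finset.univ.filter fun k => C k ≠ 0).card ≤ N' + 1 := by
          have hsub : (Finset.univ.filter fun k => C k ≠ 0) ⊆
              insert (Fin.last M)
                ((Finset.univ.filter fun i => c i ≠ 0).map Fin.castSuccEmb) := by
            intro k hk
            rw [Finset.mem_filter] at hk
            rcases Fin.eq_castSucc_or_eq_last k with ⟨i, rfl⟩ | rfl
            · refine Finset.mem_insert_of_mem ?_
              rw [Finset.mem_map]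
              refine ⟨i, ?_, rfl⟩
              rw [Finset.mem_filter]
              refine ⟨Finset.mem_univ _, ?_⟩
              rw [← hCcast i]
              exact hk.2
            · exact Finset.mem_insert_self _ _
          calc (Finset.univ.filter fun k => C k ≠ 0).card
              ≤ _ := Finset.card_le_card hsub
            _ ≤ ((Finset.univ.filter fun i => c i ≠ 0).map Fin.castSuccEmb).card + 1 :=
                Finset.card_insert_le _ _
            _ ≤ N' + 1 := by rw [Finset.card_map]; omega
        have hall := coeffs_of_hgen₁ hgen₁ C hCsupp hCsum
        intro i
        have hi := hall i.castSucc
        rwa [hCcast] at hi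
      have hgen₁u : ∀ B : Finset (Fin M), B.card ≤ N' →
          LinearIndependent ℝ (fun i : B => u i) := hgen₁_of_coeffs hcoeffs_u
      have hgen₂u : ∀ B : Finset (Fin M), N' < B.card →
          ¬∃ y : Fin N' → ℝ, ∀ i ∈ B, u i ⬝ᵥ y = b' i := by
        rintro B hB ⟨y, hy⟩
        have hlast_notmem : Fin.last M ∉ B.map Fin.castSuccEmb := by
          rw [Finset.mem_map]
          rintro ⟨i, _, hi⟩
          exact (Fin.castSucc_lt_last i).ne hi
        refine hgen₂ (insert (Fin.last M) (B.map Fin.castSuccEmb))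
          (by rw [Finset.card_insert_of_notMem hlast_notmem, Finset.card_map]; omega)
          ⟨p + ∑ j, y j • col j, ?_⟩
        intro k hk
        rw [Finset.mem_insert] at hk
        rcases hk with rfl | hk
        · rw [← hwl_def, ← hbl_def, dotProduct_add, hp, dotL]
          simp [hcol0]
        · rw [Finset.mem_map] at hk
          obtain ⟨i, hi, rfl⟩ := hk
          have hyi := hy i hi
          rw [hu] at hyi
          show wr i ⬝ᵥ (p + ∑ j, y j • col j) = br i
          rw [dotProduct_add, hyi, hb'_def]
          ring
      -- snoc membership
      have memsnoc : ∀ (t : Fin M → Bool) (x : Fin (N' + 1) → ℝ) (c : Bool),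
          x ∈ cell w b (Fin.snoc t c) ↔
            (x ∈ cell wr br t ∧ (if c then bl < wl ⬝ᵥ x else wl ⬝ᵥ x < bl)) := by
        intro t x c
        constructor
        · intro h
          refine ⟨fun i => ?_, ?_⟩
          · have hi := h i.castSucc
            rwa [Fin.snoc_castSucc] at hi
          · have hl := h (Fin.last M)
            rwa [Fin.snoc_last] at hl
        · rintro ⟨h1, h2⟩ i
          refine Fin.lastCases ?_ ?_ i
          · rw [Fin.snoc_last]
            exact h2
          · intro i0
            rw [Fin.snoc_castSucc]
            exact h1 i0
      set Ap : Set (Fin M → Bool) := {t | Fin.snoc t true ∈ Feas w b} with hAp_def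
      set Am : Set (Fin M → Bool) := {t | Fin.snoc t false ∈ Feas w b} with hAm_def
      have hboth : ∀ (t : Fin M → Bool) (x : Fin (N' + 1) → ℝ),
          x ∈ cell wr br t → wl ⬝ᵥ x = bl → t ∈ Ap ∩ Am := by
        intro t x hx hxl
        obtain ⟨ε, hε, hpert⟩ := perturb hx wl
        have habs : |ε / 2| < ε := by rw [abs_of_pos (by linarith)]; linarith
        have habs' : |-(ε / 2)| < ε := by rw [abs_neg, abs_of_pos (by linarith)]; linarith
        constructor
        · refine ⟨x + (ε / 2) • wl, (memsnoc t _ true).2 ⟨hpert (ε / 2) habs, ?_⟩⟩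
          simp only [if_true]
          rw [dotProduct_add, dotProduct_smul, smul_eq_mul, hxl]
          nlinarith
        · refine ⟨x + (-(ε / 2)) • wl, (memsnoc t _ false).2 ⟨hpert (-(ε / 2)) habs', ?_⟩⟩
          simp only [Bool.false_eq_true, if_false]
          rw [dotProduct_add, dotProduct_smul, smul_eq_mul, hxl]
          nlinarith
      have hstep2 : Ap ∪ Am = Feas wr br := by
        ext t
        constructor
        · rintro (ht | ht) <;> obtain ⟨x, hx⟩ := ht <;>
            exact ⟨x, ((memsnoc t x _).1 hx).1⟩
        · rintro ⟨x, hx⟩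
          rcases lt_trichotomy (wl ⬝ᵥ x) bl with hlt | heq | hgt
          · right
            exact ⟨x, (memsnoc t x false).2 ⟨hx, by simpa using hlt⟩⟩
          · exact Set.mem_union_left _ (hboth t x hx heq).1
          · left
            exact ⟨x, (memsnoc t x true).2 ⟨hx, by simpa using hgt⟩⟩
      have hstep3 : Ap ∩ Am = Feas u b' := by
        ext t
        constructor
        · rintro ⟨⟨xp, hxp⟩, ⟨xm, hxm⟩⟩
          obtain ⟨hxp1, hxp2⟩ := (memsnoc t xp true).1 hxp
          obtain ⟨hxm1, hxm2⟩ := (memsnoc t xm false).1 hxm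
          simp only [if_true] at hxp2
          simp only [Bool.false_eq_true, if_false] at hxm2
          set g0 := wl ⬝ᵥ xm with hg0_def
          set g1 := wl ⬝ᵥ xp with hg1_def
          have hg : g0 < g1 := lt_trans hxm2 hxp2
          set θ : ℝ := (bl - g0) / (g1 - g0) with hθ_def
          have hθ0 : 0 ≤ θ := le_of_lt (div_pos (by linarith) (by linarith))
          have hθ1 : θ ≤ 1 := by
            rw [hθ_def, div_le_one (by linarith)]
            linarith
          have hθg : θ * (g1 - g0) = bl - g0 := by
            rw [hθ_def]
            exact div_mul_cancel₀ _ (ne_of_gt (by linarith))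
          have hx0mem : (1 - θ) • xm + θ • xp ∈ cell wr br t :=
            cell_convex wr br t hxm1 hxp1 (by linarith) hθ0 (by ring)
          have hx0l : wl ⬝ᵥ ((1 - θ) • xm + θ • xp) = bl := by
            rw [dotProduct_add, dotProduct_smul, dotProduct_smul, smul_eq_mul, smul_eq_mul,
              ← hg0_def, ← hg1_def]
            nlinarith [hθg]
          have hker : wl ⬝ᵥ ((1 - θ) • xm + θ • xp - p) = 0 := by
            rw [dotProduct_sub, hx0l, hp, sub_self]
          obtain ⟨y, hy⟩ := hcolspan _ hker
          refine ⟨y, fun i => ?_⟩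
          have hui : u i ⬝ᵥ y = wr i ⬝ᵥ ((1 - θ) • xm + θ • xp) - wr i ⬝ᵥ p := by
            rw [hu, ← hy, dotProduct_sub]
          have hcond := hx0mem i
          have hb'i : b' i = br i - wr i ⬝ᵥ p := by rw [hb'_def]
          by_cases ht : t i <;>
            simp only [ht, if_true, Bool.false_eq_true, if_false] at hcond ⊢ <;>
            rw [hb'i] at * <;> linarith [hui, hcond]
        · rintro ⟨y, hy⟩
          set x0 : Fin (N' + 1) → ℝ := p + ∑ j, y j • col j with hx0_def
          have hx0l : wl ⬝ᵥ x0 = bl := by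
            rw [hx0_def, dotProduct_add, hp, dotL]
            simp [hcol0]
          have hx0mem : x0 ∈ cell wr br t := by
            intro i
            have hcond := hy i
            have hui : u i ⬝ᵥ y = wr i ⬝ᵥ x0 - wr i ⬝ᵥ p := by
              rw [hu, hx0_def, dotProduct_add]
              ring
            have hb'i : b' i = br i - wr i ⬝ᵥ p := by rw [hb'_def]
            by_cases ht : t i <;>
              simp only [ht, if_true, Bool.false_eq_true, if_false] at hcond ⊢ <;>
              rw [hb'i] at hcond <;> linarith [hui, hcond]
          exact hboth t x0 hx0mem hx0l
      -- counting
      have hsnoc_inj : ∀ c : Bool, Function.Injective (fun t : Fin M → Bool => (Fin.snoc t c : Fin (M + 1) → Bool)) := by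
        intro c t t' h
        funext i
        have hi := congrFun h i.castSucc
        simpa using hi
      have hcover : Feas w b =
          (fun t : Fin M → Bool => (Fin.snoc t true : Fin (M + 1) → Bool)) '' Ap ∪ (fun t : Fin M → Bool => (Fin.snoc t false : Fin (M + 1) → Bool)) '' Am := by
        ext s
        constructor
        · intro hs
          have hsplit := Fin.snoc_init_self s
          cases hlast : s (Fin.last M) with
          | false =>
            right
            refine ⟨Fin.init s, ?_, by rw [← hlast]; exact hsplit⟩
            show Fin.snoc (Fin.init s) false ∈ Feas w b
            rw [show Fin.snoc (Fin.init s) false = s by rw [← hlast]; exact hsplit]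
            exact hs
          | true =>
            left
            refine ⟨Fin.init s, ?_, by rw [← hlast]; exact hsplit⟩
            show Fin.snoc (Fin.init s) true ∈ Feas w b
            rw [show Fin.snoc (Fin.init s) true = s by rw [← hlast]; exact hsplit]
            exact hs
        · rintro (⟨t, ht, rfl⟩ | ⟨t, ht, rfl⟩) <;> exact ht
      have hdisj : Disjoint ((fun t : Fin M → Bool => (Fin.snoc t true : Fin (M + 1) → Bool)) '' Ap)
          ((fun t : Fin M → Bool => (Fin.snoc t false : Fin (M + 1) → Bool)) '' Am) := by
        rw [Set.disjoint_left]
        rintro s ⟨t, _, rfl⟩ ⟨t', _, heq⟩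
        have hl := congrFun heq (Fin.last M)
        simpa using hl
      have hcount : Nat.card (Feas w b) = Ap.ncard + Am.ncard := by
        rw [Nat.card_coe_set_eq, hcover,
          Set.ncard_union_eq hdisj (Set.toFinite _) (Set.toFinite _),
          Set.ncard_image_of_injective _ (hsnoc_inj true),
          Set.ncard_image_of_injective _ (hsnoc_inj false)]
      have hie := Set.ncard_union_add_ncard_inter Ap Am (Set.toFinite _) (Set.toFinite _)
      rw [hstep2, hstep3] at hie
      have ihr := ih wr br hgen₁r hgen₂r
      have ihu := ih u b' hgen₁u hgen₂u
      rw [Nat.card_coe_set_eq] at ihr ihu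
      rw [hcount, ← hie, ihr, ihu]
      exact (sum_choose_succ M N').symm

end CardRegions

open CardRegions in
/-- An affine arrangement of `M ≥ 1` hyperplanes `{x : ⟨w_i, x⟩ = b_i}` in `ℝ^N` in
general position (any at most `N` of the normals are linearly independent, and any more
than `N` of the hyperplanes have empty intersection) has exactly `Σ_{j=0}^{N} C(M, j)`
regions. -/
theorem card_regions_affine_general_position {M N : ℕ} (hM : 1 ≤ M)
    (w : Fin M → (Fin N → ℝ)) (b : Fin M → ℝ)
    (hgen₁ : ∀ B : Finset (Fin M), B.card ≤ N →
      LinearIndependent ℝ (fun i : B => w i))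
    (hgen₂ : ∀ B : Finset (Fin M), N < B.card →
      ¬∃ x : Fin N → ℝ, ∀ i ∈ B, w i ⬝ᵥ x = b i) :
    Nat.card (ConnectedComponents {x : Fin N → ℝ // ∀ i, w i ⬝ᵥ x ≠ b i})
      = ∑ j ∈ Finset.range (N + 1), M.choose j := by
  rw [card_components_eq_card_feas w b]
  exact feas_count M w b hgen₁ hgen₂
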